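/- Let $F : \bar B \to \mathbb{R}^3$ be a smooth map of the closed 3-ball that extends to an immersion of an open neighborhood of $\bar B$, is injective on the interior of $\bar B$, and whose restriction to $S^2 = \partial \bar B$ has a nonempty finite self-intersection set of double points. Then there is no isometric embedding of $(\bar B, F^* g_{Eucl})$ into Euclidean $\mathbb{R}^3$ whose boundary mean curvature agrees with that induced by $F$. More precisely: if $G : \bar B \to \mathbb{R}^3$ is an isometric embedding of $(\bar B, F^* g_{Eucl})$ into $(\mathbb{R}^3, g_{Eucl})$ such that the mean curvature of $G|_{S^2}$ equals the mean curvature of $F|_{S^2}$, a contradiction follows. -/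

import Mathlib

/-!
Statement 13: if `F` is an immersion of a neighborhood of the closed unit 3-ball into `ℝ³`
that is injective on the open ball but whose restriction to `S² = ∂B̄` has a nonempty
finite set of double points, then there is no isometric embedding `G` of `(B̄, F*g_Eucl)`
into Euclidean `ℝ³` whose boundary mean curvature agrees with that induced by `F`:
assuming such a `G` exists yields a contradiction.
-/

noncomputable section
open scoped RealInnerProductSpace

/-- Euclidean 3-space. -/
abbrev E3 := EuclideanSpace ℝ (Fin 3)

/-- The standard unit 2-sphere `S² ⊂ ℝ³`. -/
def S2 : Set E3 := Metric.sphere (0 : E3) 1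

/-- `v` is tangent to the standard sphere at `x ∈ S²`. -/
def Tang (x v : E3) : Prop := ⟪x, v⟫ = 0

/-- Differential of `F` at `x`. -/
def dF (F : E3 → E3) (x : E3) : E3 →L[ℝ] E3 := fderiv ℝ F x

/-- Metric on `S²` induced by `F` (pullback of the Euclidean metric): a smooth map on a
neighborhood of the sphere represents a map of `S²` by restriction. -/
def inducedMetric (F : E3 → E3) (x v w : E3) : ℝ := ⟪dF F x v, dF F x w⟫

/-- `F` restricts to a smooth immersion of the standard sphere `S²` into `ℝ³`. -/
def IsImmersionOnSphere (F : E3 → E3) : Prop :=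
  ContDiff ℝ (⊤ : ℕ∞) F ∧ ∀ x ∈ S2, ∀ v : E3, Tang x v → v ≠ 0 → dF F x v ≠ 0

/-- `ν` is a unit normal vector of the immersed surface `F(S²)` at `x ∈ S²`. -/
def IsUnitNormalAt (F : E3 → E3) (x ν : E3) : Prop :=
  ‖ν‖ = 1 ∧ ∀ v : E3, Tang x v → ⟪ν, dF F x v⟫ = 0

/-- Second fundamental form of the immersion `F|_{S²}` at `x ∈ S²` with respect to the unit
normal `ν`, evaluated on tangent vectors `v, w` of `S²` at `x`: the normal component of the
intrinsic second derivative of `F` along the sphere (the term `⟪v,w⟫ • dF F x x` accounts for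
the curvature of the parametrizing sphere). -/
def sff (F : E3 → E3) (x ν v w : E3) : ℝ :=
  ⟪ν, (fderiv ℝ (fun y => fderiv ℝ F y v) x) w - ⟪v, w⟫ • dF F x x⟫

/-- The trace of the bilinear form `A` with respect to the positive-definite bilinear form
`γ` on a 2-plane, computed in the basis `b₁, b₂`. -/
def traceFormula (γ A : E3 → E3 → ℝ) (b₁ b₂ : E3) : ℝ :=
  (γ b₁ b₁ * A b₂ b₂ + γ b₂ b₂ * A b₁ b₁ - 2 * γ b₁ b₂ * A b₁ b₂) /
    (γ b₁ b₁ * γ b₂ b₂ - (γ b₁ b₂) ^ 2)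

/-- `h` is the mean curvature at `x ∈ S²` of the immersion `F|_{S²}` with respect to the unit
normal `ν`: the trace of the second fundamental form with respect to the induced metric
(computed in any orthonormal tangent basis of the round sphere at `x`). -/
def IsMeanCurvAt (F : E3 → E3) (x ν : E3) (h : ℝ) : Prop :=
  IsUnitNormalAt F x ν ∧ ∀ b₁ b₂ : E3, Tang x b₁ → Tang x b₂ →
    ⟪b₁, b₂⟫ = 0 → ‖b₁‖ = 1 → ‖b₂‖ = 1 →
    h = traceFormula (inducedMetric F x) (sff F x ν) b₁ b₂

set_option maxHeartbeats 2000000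

lemma const_of_hasFDerivAt_zero' {Y : Type*} [NormedAddCommGroup Y] [NormedSpace ℝ Y]
    (f : E3 → Y) (h : ∀ x ∈ Metric.ball (0 : E3) 1, HasFDerivAt f (0 : E3 →L[ℝ] Y) x) :
    ∀ x ∈ Metric.ball (0 : E3) 1, f x = f 0 := by
  intro x hx
  have h0 : (0 : E3) ∈ Metric.ball (0 : E3) 1 := by simp
  have := (convex_ball (0 : E3) 1).norm_image_sub_le_of_norm_hasFDerivWithin_le
    (f' := fun _ => (0 : E3 →L[ℝ] Y)) (C := 0)
    (fun y hy => (h y hy).hasFDerivWithinAt) (fun y hy => by simp) h0 hx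
  simp only [zero_mul] at this
  have := norm_le_zero_iff.mp this
  rwa [sub_eq_zero] at this

lemma rigidity' (U : Set E3) (hU : IsOpen U) (hBU : Metric.closedBall (0 : E3) 1 ⊆ U)
    (F G : E3 → E3)
    (hF : ContDiffOn ℝ (⊤ : ℕ∞) F U) (hG : ContDiffOn ℝ (⊤ : ℕ∞) G U)
    (hFimm : ∀ x ∈ U, Function.Injective (fderiv ℝ F x))
    (hGiso : ∀ x ∈ Metric.closedBall (0 : E3) 1, ∀ v w : E3,
      ⟪fderiv ℝ G x v, fderiv ℝ G x w⟫ = ⟪fderiv ℝ F x v, fderiv ℝ F x w⟫) :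
    ∀ z ∈ Metric.closedBall (0 : E3) 1, ∀ z' ∈ Metric.closedBall (0 : E3) 1,
      F z = F z' → G z = G z' := by
  classical
  set B : Set E3 := Metric.ball (0 : E3) 1 with hBdef
  have hBsub : B ⊆ Metric.closedBall (0 : E3) 1 := Metric.ball_subset_closedBall
  have hBsubU : B ⊆ U := hBsub.trans hBU
  have h0B : (0 : E3) ∈ B := by simp [hBdef]
  set DF : E3 → (E3 →L[ℝ] E3) := fun x => fderiv ℝ F x with hDFdef
  set DG : E3 → (E3 →L[ℝ] E3) := fun x => fderiv ℝ G x with hDGdef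
  have hDFsm : ContDiffOn ℝ (⊤ : ℕ∞) DF U := hF.fderiv_of_isOpen hU (by simp)
  have hDGsm : ContDiffOn ℝ (⊤ : ℕ∞) DG U := hG.fderiv_of_isOpen hU (by simp)
  have hFd : ∀ x ∈ U, HasFDerivAt F (DF x) x := fun x hx =>
    ((hF.differentiableOn (by simp)).differentiableAt (hU.mem_nhds hx)).hasFDerivAt
  have hGd : ∀ x ∈ U, HasFDerivAt G (DG x) x := fun x hx =>
    ((hG.differentiableOn (by simp)).differentiableAt (hU.mem_nhds hx)).hasFDerivAt
  set BF : E3 → (E3 →L[ℝ] E3 →L[ℝ] E3) := fun x => fderiv ℝ DF x with hBFdef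
  set BG : E3 → (E3 →L[ℝ] E3 →L[ℝ] E3) := fun x => fderiv ℝ DG x with hBGdef
  have hDFd : ∀ x ∈ U, HasFDerivAt DF (BF x) x := fun x hx =>
    ((hDFsm.differentiableOn (by simp)).differentiableAt (hU.mem_nhds hx)).hasFDerivAt
  have hDGd : ∀ x ∈ U, HasFDerivAt DG (BG x) x := fun x hx =>
    ((hDGsm.differentiableOn (by simp)).differentiableAt (hU.mem_nhds hx)).hasFDerivAt
  -- injectivity and surjectivity of the differentials
  have hDGinj : ∀ x ∈ Metric.closedBall (0 : E3) 1, Function.Injective (DG x) := by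
    intro x hx a b hab
    have h1 : DG x (a - b) = 0 := by rw [map_sub, hab, sub_self]
    have h2 : ⟪DF x (a - b), DF x (a - b)⟫ = 0 := by
      rw [← hGiso x hx (a - b) (a - b), h1]; simp
    have h3 : DF x (a - b) = 0 := inner_self_eq_zero.mp h2
    have h4 : a - b = 0 := hFimm x (hBU hx) (by simpa using h3)
    exact sub_eq_zero.mp h4
  have hDGsurj : ∀ x ∈ Metric.closedBall (0 : E3) 1, Function.Surjective (DG x) :=
    fun x hx => LinearMap.injective_iff_surjective.mp (hDGinj x hx)
  -- units for DF
  have hDFunit : ∀ x ∈ U, ∃ u : (E3 →L[ℝ] E3)ˣ, (u : E3 →L[ℝ] E3) = DF x := by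
    intro x hx
    have hinj : Function.Injective (DF x) := hFimm x hx
    have hsurj : Function.Surjective (DF x) := LinearMap.injective_iff_surjective.mp hinj
    exact ⟨(ContinuousLinearEquiv.ofBijective (DF x)
      (LinearMap.ker_eq_bot.mpr hinj)
      (LinearMap.range_eq_top.mpr hsurj)).toUnit, rfl⟩
  -- the key second-derivative identity
  have key : ∀ x ∈ B, ∀ u v w : E3, ⟪BG x u v, DG x w⟫ = ⟪BF x u v, DF x w⟫ := by
    intro x hxB
    have hxU : x ∈ U := hBsubU hxB
    have hS : ∀ u v w : E3,
        ⟪BG x u v, DG x w⟫ + ⟪DG x v, BG x u w⟫ =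
        ⟪BF x u v, DF x w⟫ + ⟪DF x v, BF x u w⟫ := by
      intro u v w
      have hDFv : HasFDerivAt (fun y => DF y v) ((DF x).comp 0 + (BF x).flip v) x :=
        (hDFd x hxU).clm_apply (hasFDerivAt_const v x)
      have hDFw : HasFDerivAt (fun y => DF y w) ((DF x).comp 0 + (BF x).flip w) x :=
        (hDFd x hxU).clm_apply (hasFDerivAt_const w x)
      have hDGv : HasFDerivAt (fun y => DG y v) ((DG x).comp 0 + (BG x).flip v) x :=
        (hDGd x hxU).clm_apply (hasFDerivAt_const v x)
      have hDGw : HasFDerivAt (fun y => DG y w) ((DG x).comp 0 + (BG x).flip w) x :=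
        (hDGd x hxU).clm_apply (hasFDerivAt_const w x)
      have hSF := hDFv.inner ℝ hDFw
      have hSG := hDGv.inner ℝ hDGw
      have heq : (fun y => ⟪DG y v, DG y w⟫) =ᶠ[nhds x] (fun y => ⟪DF y v, DF y w⟫) := by
        filter_upwards [Metric.isOpen_ball.mem_nhds hxB] with y hy
        exact hGiso y (hBsub hy) v w
      have hSG' := hSG.congr_of_eventuallyEq heq.symm
      have huniq := hSG'.unique hSF
      have happ := DFunLike.congr_fun huniq u
      simp only [ContinuousLinearMap.comp_apply, ContinuousLinearMap.prod_apply,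
        fderivInnerCLM_apply, ContinuousLinearMap.add_apply, ContinuousLinearMap.flip_apply,
        ContinuousLinearMap.comp_zero, ContinuousLinearMap.zero_apply, zero_add] at happ
      linarith [happ]
    have hsymF : ∀ u v : E3, BF x u v = BF x v u := by
      have h := (hF.contDiffAt (hU.mem_nhds hxU)).isSymmSndFDerivAt ((by rw [minSmoothness_of_isRCLikeNormedField]; exact WithTop.coe_le_coe.mpr (le_top : (2 : ℕ∞) ≤ ⊤)))
      intro u v
      simpa [hBFdef, hDFdef] using h u v
    have hsymG : ∀ u v : E3, BG x u v = BG x v u := by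
      have h := (hG.contDiffAt (hU.mem_nhds hxU)).isSymmSndFDerivAt ((by rw [minSmoothness_of_isRCLikeNormedField]; exact WithTop.coe_le_coe.mpr (le_top : (2 : ℕ∞) ≤ ⊤)))
      intro u v
      simpa [hBGdef, hDGdef] using h u v
    set tg : E3 → E3 → E3 → ℝ := fun a b c => ⟪BG x a b, DG x c⟫ with htg
    set tf : E3 → E3 → E3 → ℝ := fun a b c => ⟪BF x a b, DF x c⟫ with htf
    have hS' : ∀ u v w : E3, tg u v w + tg u w v = tf u v w + tf u w v := by
      intro u v w
      have h := hS u v w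
      rw [real_inner_comm (BG x u w) (DG x v), real_inner_comm (BF x u w) (DF x v)] at h
      exact h
    have sg : ∀ u v w : E3, tg u v w = tg v u w := by
      intro u v w; simp only [htg, hsymG u v]
    have sf : ∀ u v w : E3, tf u v w = tf v u w := by
      intro u v w; simp only [htf, hsymF u v]
    intro u v w
    show tg u v w = tf u v w
    linarith [hS' u v w, hS' v u w, hS' w u v, sg v u w, sg v w u, sg w u v,
      sf v u w, sf v w u, sf w u v, sg w v u, sf w v u]
  -- definition of the rotation field
  set Φ : E3 → (E3 →L[ℝ] E3) := fun y => (DG y).comp (Ring.inverse (DF y)) with hΦdef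
  -- the second-derivative relation : BG = Φ ∘ BF
  have claim2 : ∀ x ∈ B, ∀ u' : (E3 →L[ℝ] E3)ˣ, (u' : E3 →L[ℝ] E3) = DF x →
      ∀ a b : E3, BG x a b = DG x ((↑u'⁻¹ : E3 →L[ℝ] E3) (BF x a b)) := by
    intro x hxB u' hu' a b
    have hxU : x ∈ U := hBsubU hxB
    have hxCB : x ∈ Metric.closedBall (0 : E3) 1 := hBsub hxB
    have hDFinv : ∀ c : E3, DF x ((↑u'⁻¹ : E3 →L[ℝ] E3) c) = c := by
      intro c
      rw [← hu', ← ContinuousLinearMap.mul_apply, u'.mul_inv, ContinuousLinearMap.one_apply]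
    have hqw : ∀ w : E3, ⟪BG x a b - DG x ((↑u'⁻¹ : E3 →L[ℝ] E3) (BF x a b)), DG x w⟫ = 0 := by
      intro w
      have h1 : ⟪BG x a b, DG x w⟫ = ⟪BF x a b, DF x w⟫ := key x hxB a b w
      have h2 : ⟪DG x ((↑u'⁻¹ : E3 →L[ℝ] E3) (BF x a b)), DG x w⟫
          = ⟪BF x a b, DF x w⟫ := by
        rw [hGiso x hxCB, hDFinv]
      rw [inner_sub_left, h1, h2, sub_self]
    have hq0 : BG x a b - DG x ((↑u'⁻¹ : E3 →L[ℝ] E3) (BF x a b)) = 0 := by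
      apply inner_self_eq_zero
        (𝕜 := ℝ) (x := BG x a b - DG x ((↑u'⁻¹ : E3 →L[ℝ] E3) (BF x a b))) |>.mp
      obtain ⟨w, hw⟩ := hDGsurj x hxCB (BG x a b - DG x ((↑u'⁻¹ : E3 →L[ℝ] E3) (BF x a b)))
      nth_rewrite 2 [← hw]
      exact hqw w
    exact sub_eq_zero.mp hq0
  -- Φ has zero derivative on B
  have hΦ0 : ∀ x ∈ B, HasFDerivAt Φ (0 : E3 →L[ℝ] E3 →L[ℝ] E3) x := by
    intro x hxB
    have hxU : x ∈ U := hBsubU hxB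
    obtain ⟨u', hu'⟩ := hDFunit x hxU
    have hinv1 := hasFDerivAt_ringInverse (𝕜 := ℝ) u'
    rw [hu'] at hinv1
    have hinvd := hinv1.comp x (hDFd x hxU)
    have hΦd := (hDGd x hxU).clm_comp hinvd
    apply hΦd.congr_fderiv
    apply ContinuousLinearMap.ext; intro a
    apply ContinuousLinearMap.ext; intro v
    have hinvu : Ring.inverse (DF x) = (↑u'⁻¹ : E3 →L[ℝ] E3) := by
      rw [← hu', Ring.inverse_unit]
    simp only [ContinuousLinearMap.add_apply, ContinuousLinearMap.comp_apply,
      ContinuousLinearMap.compL_apply, ContinuousLinearMap.flip_apply,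
      ContinuousLinearMap.neg_apply, ContinuousLinearMap.mulLeftRight_apply,
      ContinuousLinearMap.zero_apply, ContinuousLinearMap.mul_apply, hinvu]
    have h2 := claim2 x hxB u' hu' a ((↑u'⁻¹ : E3 →L[ℝ] E3) v)
    simp only [Function.comp_apply, hinvu, map_neg]
    rw [h2]
    abel
  -- Φ is constant, defining the rigid motion A
  have hΦconst : ∀ x ∈ B, Φ x = Φ 0 := const_of_hasFDerivAt_zero' Φ hΦ0
  set A : E3 →L[ℝ] E3 := Φ 0 with hA
  have hDGA : ∀ x ∈ B, ∀ v : E3, DG x v = A (DF x v) := by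
    intro x hxB v
    obtain ⟨u', hu'⟩ := hDFunit x (hBsubU hxB)
    have hinvu : Ring.inverse (DF x) = (↑u'⁻¹ : E3 →L[ℝ] E3) := by
      rw [← hu', Ring.inverse_unit]
    have h1 : Φ x (DF x v) = DG x v := by
      simp only [hΦdef, ContinuousLinearMap.comp_apply, hinvu]
      congr 1
      rw [← hu', ← ContinuousLinearMap.mul_apply, u'.inv_mul, ContinuousLinearMap.one_apply]
    calc DG x v = Φ x (DF x v) := h1.symm
      _ = A (DF x v) := by rw [hΦconst x hxB]
  -- G - A ∘ F is constant on the ball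
  have hGAF : ∀ x ∈ B, G x - A (F x) = G 0 - A (F 0) := by
    apply const_of_hasFDerivAt_zero'
    intro x hxB
    have hxU := hBsubU hxB
    have h1 : HasFDerivAt (fun y => A (F y)) (A.comp (DF x)) x :=
      (A.hasFDerivAt).comp x (hFd x hxU)
    have h2 := (hGd x hxU).sub h1
    apply h2.congr_fderiv
    apply ContinuousLinearMap.ext; intro v
    simp only [ContinuousLinearMap.sub_apply, ContinuousLinearMap.comp_apply,
      ContinuousLinearMap.zero_apply]
    rw [hDGA x hxB v, sub_self]
  -- extend by continuity to the closed ball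
  have hcl : ∀ z ∈ Metric.closedBall (0 : E3) 1, G z - A (F z) = G 0 - A (F 0) := by
    intro z hz
    have hzU : z ∈ U := hBU hz
    have hcG : ContinuousAt G z := hG.continuousOn.continuousAt (hU.mem_nhds hzU)
    have hcF : ContinuousAt F z := hF.continuousOn.continuousAt (hU.mem_nhds hzU)
    have hcont : ContinuousAt (fun y => G y - A (F y)) z :=
      hcG.sub (A.continuous.continuousAt.comp hcF)
    have hzc : z ∈ closure B := by
      rw [hBdef, closure_ball (0 : E3) one_ne_zero]; exact hz
    haveI : (nhdsWithin z B).NeBot := mem_closure_iff_nhdsWithin_neBot.mp hzc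
    refine tendsto_nhds_unique (hcont.continuousWithinAt (s := B)) ?_
    apply Filter.Tendsto.congr' ?_ tendsto_const_nhds
    filter_upwards [self_mem_nhdsWithin] with y hy
    exact (hGAF y hy).symm
  -- conclude
  intro z hz z' hz' hFzz
  have e1 := hcl z hz
  have e2 := hcl z' hz'
  have h3 : G z - A (F z) = G z' - A (F z') := by rw [e1, e2]
  rw [hFzz] at h3
  exact sub_left_inj.mp h3


/-- Let `F` be a smooth immersion of a neighborhood `U` of the closed
unit ball `B̄ ⊂ ℝ³`, injective on the open ball, whose restriction to the boundary sphere
has a nonempty, finite self-intersection set consisting of double points (so `F` is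
injective off that set). If `G` is an isometric embedding of `(B̄, F*g_Eucl)` into
`(ℝ³, g_Eucl)` such that the mean curvature of `G|_{S²}` equals the mean curvature of
`F|_{S²}` (with respect to unit normal fields `ν_F, ν_G`), then a contradiction follows. -/
theorem no_isometric_embedding_of_immersed_ball
    (U : Set E3) (hU : IsOpen U) (hBU : Metric.closedBall (0 : E3) 1 ⊆ U)
    (F : E3 → E3) (hF : ContDiffOn ℝ (⊤ : ℕ∞) F U)
    (hFimm : ∀ x ∈ U, Function.Injective (fderiv ℝ F x))
    -- `F` is injective on the interior of the closed ball
    (hFinjint : Set.InjOn F (Metric.ball (0 : E3) 1))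
    -- the self-intersection set of `F` on the closed ball lies on the boundary sphere,
    -- is finite and nonempty, and consists of double points
    (hZsub : {p : E3 | p ∈ Metric.closedBall (0 : E3) 1 ∧
        ∃ q ∈ Metric.closedBall (0 : E3) 1, q ≠ p ∧ F q = F p} ⊆ S2)
    (hZfin : {p : E3 | p ∈ Metric.closedBall (0 : E3) 1 ∧
        ∃ q ∈ Metric.closedBall (0 : E3) 1, q ≠ p ∧ F q = F p}.Finite)
    (hZne : ∃ z ∈ S2, ∃ z' ∈ S2, z ≠ z' ∧ F z = F z')
    (hdouble : ∀ a ∈ Metric.closedBall (0 : E3) 1, ∀ b ∈ Metric.closedBall (0 : E3) 1,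
      ∀ c ∈ Metric.closedBall (0 : E3) 1, F a = F b → F b = F c → a = b ∨ a = c ∨ b = c)
    -- `G` is an isometric embedding of `(B̄, F*g_Eucl)` into Euclidean space
    (G : E3 → E3) (hG : ContDiffOn ℝ (⊤ : ℕ∞) G U)
    (hGinj : Set.InjOn G (Metric.closedBall (0 : E3) 1))
    (hGiso : ∀ x ∈ Metric.closedBall (0 : E3) 1, ∀ v w : E3,
      ⟪fderiv ℝ G x v, fderiv ℝ G x w⟫ = ⟪fderiv ℝ F x v, fderiv ℝ F x w⟫)
    -- the boundary mean curvatures agree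
    (νF νG : E3 → E3) (hνF : Continuous νF) (hνG : Continuous νG) (H : E3 → ℝ)
    (hHF : ∀ x ∈ S2, IsMeanCurvAt F x (νF x) (H x))
    (hHG : ∀ x ∈ S2, IsMeanCurvAt G x (νG x) (H x)) :
    False := by
  obtain ⟨z, hz, z', hz', hne, hFz⟩ := hZne
  have hzc : z ∈ Metric.closedBall (0 : E3) 1 := Metric.sphere_subset_closedBall hz
  have hz'c : z' ∈ Metric.closedBall (0 : E3) 1 := Metric.sphere_subset_closedBall hz'
  have hGz : G z = G z' :=
    rigidity' U hU hBU F G hF hG hFimm hGiso z hzc z' hz'c hFz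
  exact hne (hGinj hzc hz'c hGz)
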